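/- Let b ∈ L²(ℝ³; ℝ³) be axially symmetric, i.e. b(Rx) = R b(x) for almost every x and every rotation R about the x₃-axis. There is an absolute constant C such that for every x ∈ ℝ³ with r = √(x₁² + x₂²) ∈ (0, 1/2], setting r₀ = r^{3/2} |ln r|^{−1/2}, one has ∫_{B(x, 2r₀)} |b|² dy ≤ C r^{1/2} |ln r|^{−1/2} ∫_{ℝ³} |b|² dy. -/

import Mathlib

noncomputable section
open Real MeasureTheory Metric Set ENNReal

local notation "ℝ³" => EuclideanSpace ℝ (Fin 3)

def rad (x : ℝ³) : ℝ := Real.sqrt ((x 0)^2 + (x 1)^2)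

def erv (x : ℝ³) : ℝ³ :=
  (rad x)⁻¹ • (EuclideanSpace.single 0 (x 0) + EuclideanSpace.single 1 (x 1))

def ethv (x : ℝ³) : ℝ³ :=
  (rad x)⁻¹ • (EuclideanSpace.single 0 (-(x 1)) + EuclideanSpace.single 1 (x 0))

def ezv : ℝ³ := EuclideanSpace.single 2 1

/-- spatial partial derivative of a scalar field -/
def pdv (f : ℝ³ → ℝ) (i : Fin 3) (x : ℝ³) : ℝ := fderiv ℝ f x (EuclideanSpace.single i 1)

/-- The Navier–Stokes equations (with the divergence-free condition) hold at `(x, t)`. -/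
def NSEqnAt (v : ℝ³ → ℝ → ℝ³) (p : ℝ³ → ℝ → ℝ) (x : ℝ³) (t : ℝ) : Prop :=
  (∀ k : Fin 3,
      (∑ i, pdv (fun y => pdv (fun y' => v y' t k) i y) i x)
        - (∑ j, v x t j * pdv (fun y => v y t k) j x)
        - pdv (fun y => p y t) k x
        - deriv (fun s => v x s k) t = 0)
    ∧ (∑ j, pdv (fun y => v y t j) j x) = 0

/-- Axially symmetric decomposition of `(v, p)` at `(x, t)` with cylindrical components. -/
def AxisymAt (v : ℝ³ → ℝ → ℝ³) (p : ℝ³ → ℝ → ℝ) (vr vθ vz P : ℝ → ℝ → ℝ → ℝ)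
    (x : ℝ³) (t : ℝ) : Prop :=
  (0 < rad x →
      v x t = vr (rad x) (x 2) t • erv x + vθ (rad x) (x 2) t • ethv x
        + vz (rad x) (x 2) t • ezv)
    ∧ p x t = P (rad x) (x 2) t

/-- Smoothness of a cylindrical-coordinate scalar function on `{r > 0} × ℝ × I`. -/
def SmoothCyl (f : ℝ → ℝ → ℝ → ℝ) (I : Set ℝ) : Prop :=
  ContDiffOn ℝ (⊤ : ℕ∞) (fun q : ℝ × ℝ × ℝ => f q.1 q.2.1 q.2.2) (Ioi 0 ×ˢ (univ : Set ℝ) ×ˢ I)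

def d1 (f : ℝ → ℝ → ℝ → ℝ) (r z t : ℝ) : ℝ := deriv (fun r' => f r' z t) r
def d2 (f : ℝ → ℝ → ℝ → ℝ) (r z t : ℝ) : ℝ := deriv (fun z' => f r z' t) z
def d3 (f : ℝ → ℝ → ℝ → ℝ) (r z t : ℝ) : ℝ := deriv (fun t' => f r z t') t

/-- The angular vorticity `ω_θ = ∂_z v_r − ∂_r v_z` in cylindrical coordinates. -/
def omθ (vr vz : ℝ → ℝ → ℝ → ℝ) (r z t : ℝ) : ℝ := d2 vr r z t - d1 vz r z t


/-- Rotation of ℝ³ by angle `α` about the `x₃`-axis. -/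
def rotZ (α : ℝ) (x : ℝ³) : ℝ³ :=
  EuclideanSpace.single 0 (Real.cos α * x 0 - Real.sin α * x 1)
    + EuclideanSpace.single 1 (Real.sin α * x 0 + Real.cos α * x 1)
    + EuclideanSpace.single 2 (x 2)


lemma rotZ_apply0 (α : ℝ) (x : ℝ³) : rotZ α x 0 = Real.cos α * x 0 - Real.sin α * x 1 := by
  simp [rotZ, EuclideanSpace.single_apply]
lemma rotZ_apply1 (α : ℝ) (x : ℝ³) : rotZ α x 1 = Real.sin α * x 0 + Real.cos α * x 1 := by
  simp [rotZ, EuclideanSpace.single_apply]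
lemma rotZ_apply2 (α : ℝ) (x : ℝ³) : rotZ α x 2 = x 2 := by
  simp [rotZ, EuclideanSpace.single_apply]

lemma rotZ_rotZ (α β : ℝ) (x : ℝ³) : rotZ α (rotZ β x) = rotZ (α + β) x := by
  ext i
  fin_cases i <;>
    simp [rotZ_apply0, rotZ_apply1, rotZ_apply2, Real.cos_add, Real.sin_add] <;> ring

lemma rotZ_zero (x : ℝ³) : rotZ 0 x = x := by
  ext i; fin_cases i <;> simp [rotZ_apply0, rotZ_apply1, rotZ_apply2]

lemma rotZ_norm (α : ℝ) (x : ℝ³) : ‖rotZ α x‖ = ‖x‖ := by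
  rw [EuclideanSpace.norm_eq, EuclideanSpace.norm_eq]
  congr 1
  simp only [Fin.sum_univ_three, rotZ_apply0, rotZ_apply1, rotZ_apply2, Real.norm_eq_abs, sq_abs]
  nlinarith [Real.sin_sq_add_cos_sq α]

def rotL (α : ℝ) : ℝ³ →ₗ[ℝ] ℝ³ where
  toFun := rotZ α
  map_add' := by
    intro y z; ext i
    fin_cases i <;>
      simp [rotZ_apply0, rotZ_apply1, rotZ_apply2] <;> ring
  map_smul' := by
    intro c y; ext i
    fin_cases i <;>
      simp [rotZ_apply0, rotZ_apply1, rotZ_apply2] <;> ring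

def rotE (α : ℝ) : ℝ³ ≃ₗᵢ[ℝ] ℝ³ :=
  { LinearEquiv.ofLinear (re₁₂ := RingHomInvPair.ids) (re₂₁ := RingHomInvPair.ids) (rotL α) (rotL (-α))
      (by ext x; simp [rotL, rotZ_rotZ, rotZ_zero])
      (by ext x; simp [rotL, rotZ_rotZ, rotZ_zero]) with
    norm_map' := rotZ_norm α }

lemma rotE_coe (α : ℝ) : ⇑(rotE α) = rotZ α := rfl

lemma rotZ_sub (α : ℝ) (y z : ℝ³) : rotZ α y - rotZ α z = rotZ α (y - z) := by
  rw [← rotE_coe]; exact ((rotE α).map_sub y z).symm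

lemma norm_rotZ_sub_self (γ : ℝ) (x : ℝ³) :
    ‖rotZ γ x - x‖ = 2 * |Real.sin (γ / 2)| * rad x := by
  have h2 : Real.sin (γ / 2) ^ 2 = 1 / 2 - Real.cos γ / 2 := by
    have := Real.sin_sq_eq_half_sub (γ / 2)
    rwa [show 2 * (γ / 2) = γ by ring] at this
  have hrad : rad x ^ 2 = (x 0) ^ 2 + (x 1) ^ 2 := by
    rw [rad]; exact Real.sq_sqrt (by positivity)
  rw [EuclideanSpace.norm_eq]
  have : ∑ i, ‖(rotZ γ x - x) i‖ ^ 2 = (2 * |Real.sin (γ / 2)| * rad x) ^ 2 := by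
    have e0 : (rotZ γ x - x) 0 = Real.cos γ * x 0 - Real.sin γ * x 1 - x 0 := by
      simp [rotZ_apply0]
    have e1 : (rotZ γ x - x) 1 = Real.sin γ * x 0 + Real.cos γ * x 1 - x 1 := by
      simp [rotZ_apply1]
    have e2 : (rotZ γ x - x) 2 = 0 := by simp [rotZ_apply2]
    rw [Fin.sum_univ_three, e0, e1, e2]
    simp only [Real.norm_eq_abs, sq_abs, mul_pow]
    nlinarith [Real.sin_sq_add_cos_sq γ, sq_abs (Real.sin (γ/2)),
      Real.sqrt_nonneg ((x 0)^2 + (x 1)^2)]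
  rw [this]
  have hr : (0:ℝ) ≤ rad x := Real.sqrt_nonneg _
  exact Real.sqrt_sq (by positivity)

lemma rot_ball_integral (b : ℝ³ → ℝ³) (α : ℝ)
    (hsym : ∀ᵐ y ∂(volume : Measure ℝ³), b (rotZ α y) = rotZ α (b y))
    (x : ℝ³) (ρ : ℝ) :
    (∫ y in ball (rotZ α x) ρ, ‖b y‖ ^ 2) = ∫ y in ball x ρ, ‖b y‖ ^ 2 := by
  have hmp : MeasurePreserving (rotZ α) (volume : Measure ℝ³) volume := by
    rw [← rotE_coe]; exact (rotE α).measurePreserving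
  have hemb : MeasurableEmbedding (rotZ α) := by
    rw [← rotE_coe]; exact (rotE α).toHomeomorph.measurableEmbedding
  have h1 := hmp.setIntegral_preimage_emb hemb (fun y => ‖b y‖ ^ 2) (ball (rotZ α x) ρ)
  have hpre : (rotZ α) ⁻¹' (ball (rotZ α x) ρ) = ball x ρ := by
    ext y
    simp only [mem_preimage, mem_ball]
    rw [dist_eq_norm, dist_eq_norm, rotZ_sub, rotZ_norm]
  rw [hpre] at h1
  rw [← h1]
  refine integral_congr_ae ?_
  filter_upwards [ae_restrict_of_ae hsym] with y hy
  rw [hy, rotZ_norm]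

lemma sin_lower {N m : ℕ} (h2 : 2 ≤ N) (hm1 : 1 ≤ m) (hmN : m < N) :
    2 / (N : ℝ) ≤ Real.sin (π * m / N) := by
  have hNpos : (0:ℝ) < N := by positivity
  have hπ := Real.pi_pos
  set t := π * m / N with ht
  have ht0 : 0 ≤ t := by positivity
  have hm : (1:ℝ) ≤ (m:ℝ) := by exact_mod_cast hm1
  have hmN' : (m:ℝ) + 1 ≤ (N:ℝ) := by exact_mod_cast hmN
  rcases le_or_gt t (π / 2) with h | h
  · refine le_trans ?_ (Real.mul_le_sin ht0 h)
    have he : 2 / π * t = 2 * m / N := by rw [ht]; field_simp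
    rw [he, div_le_div_iff₀ hNpos hNpos]
    nlinarith
  · have htpi : t ≤ π - π / N := by
      rw [ht, div_le_iff₀ hNpos]
      have : (π - π / N) * N = π * N - π := by field_simp
      rw [this]; nlinarith
    have hNinv : 0 < π / N := by positivity
    have h1 : 0 ≤ π - t := by linarith
    have h2' : π - t ≤ π / 2 := by linarith
    have hj := Real.mul_le_sin h1 h2'
    rw [Real.sin_pi_sub] at hj
    refine le_trans ?_ hj
    calc 2 / (N:ℝ) = 2 / π * (π / N) := by field_simp
      _ ≤ 2 / π * (π - t) := mul_le_mul_of_nonneg_left (by linarith) (by positivity)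

set_option maxHeartbeats 2000000 in
/-- For an axially symmetric `b ∈ L²(ℝ³;ℝ³)` and `0 < r ≤ 1/2`, with
`r₀ = r^{3/2}|ln r|^{−1/2}`, the `L²` mass of `b` on `B(x, 2r₀)` is at most
`C r^{1/2}|ln r|^{−1/2}` times the total `L²` mass. -/
theorem axisym_local_energy_smallness :
    ∃ C : ℝ, 0 < C ∧
      ∀ b : ℝ³ → ℝ³, MemLp b 2 volume →
        (∀ α : ℝ, ∀ᵐ y ∂(volume : Measure ℝ³), b (rotZ α y) = rotZ α (b y)) →
        ∀ x : ℝ³, 0 < rad x → rad x ≤ 1 / 2 →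
          (∫ y in ball x (2 * ((rad x) ^ ((3 : ℝ) / 2) * |Real.log (rad x)| ^ (-(1 : ℝ) / 2))),
              ‖b y‖ ^ 2)
            ≤ C * (rad x) ^ ((1 : ℝ) / 2) * |Real.log (rad x)| ^ (-(1 : ℝ) / 2)
                * ∫ y : ℝ³, ‖b y‖ ^ 2 := by
  refine ⟨2, by norm_num, ?_⟩
  intro b hb hsym x hr0 hr1
  set r := rad x with hrdef
  have hrlt1 : r < 1 := lt_of_le_of_lt hr1 (by norm_num)
  have hlog : Real.log r < 0 := Real.log_neg hr0 hrlt1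
  set L : ℝ := |Real.log r| with hLdef
  have hLpos : 0 < L := abs_pos.mpr (ne_of_lt hlog)
  set r₀ : ℝ := r ^ ((3:ℝ)/2) * L ^ (-(1:ℝ)/2) with hr₀def
  have hr₀pos : 0 < r₀ := mul_pos (Real.rpow_pos_of_pos hr0 _) (Real.rpow_pos_of_pos hLpos _)
  set s : ℝ := 2 * (r ^ ((1:ℝ)/2) * L ^ (-(1:ℝ)/2)) with hsdef
  have hspos : 0 < s := by
    have := Real.rpow_pos_of_pos hr0 ((1:ℝ)/2)
    have := Real.rpow_pos_of_pos hLpos (-(1:ℝ)/2)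
    positivity
  have hpow : r ^ ((1:ℝ)/2) * r = r ^ ((3:ℝ)/2) := by
    have h := Real.rpow_add hr0 ((1:ℝ)/2) 1
    rw [Real.rpow_one] at h
    rw [← h]; norm_num
  have hsr' : s * r = 2 * r₀ := by rw [hsdef, hr₀def, ← hpow]; ring
  -- integrability
  have hf : Integrable (fun y => ‖b y‖ ^ 2) (volume : Measure ℝ³) := by
    have h := hb.integrable_norm_rpow (by norm_num) (by norm_num)
    simpa [ENNReal.toReal_ofNat, Real.rpow_natCast] using h
  have hfnn : 0 ≤ᵐ[volume] fun y : ℝ³ => ‖b y‖ ^ 2 :=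
    Filter.Eventually.of_forall fun y => by positivity
  set T := ∫ y : ℝ³, ‖b y‖ ^ 2 with hTdef
  have hTnn : 0 ≤ T := integral_nonneg fun y => by positivity
  set I := ∫ y in ball x (2 * r₀), ‖b y‖ ^ 2 with hIdef
  have hInn : 0 ≤ I := setIntegral_nonneg measurableSet_ball fun y _ => by positivity
  have hIT : I ≤ T := setIntegral_le_integral hf hfnn
  have hgoal : (2:ℝ) * r ^ ((1:ℝ)/2) * L ^ (-(1:ℝ)/2) * T = s * T := by rw [hsdef]; ring
  show I ≤ 2 * r ^ ((1:ℝ)/2) * L ^ (-(1:ℝ)/2) * T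
  rw [hgoal]
  rcases lt_or_ge 1 s with hcase | hcase
  · exact hIT.trans (le_mul_of_one_le_left hTnn hcase.le)
  · -- s ≤ 1 : pack N disjoint rotated balls
    set N : ℕ := ⌊2 / s⌋₊ with hNdef
    have h2s : (2:ℝ) ≤ 2 / s := by
      rw [le_div_iff₀ hspos]; linarith
    have hN2 : 2 ≤ N := Nat.le_floor (by exact_mod_cast h2s)
    have hNpos : (0:ℝ) < N := by positivity
    have hNle : (N:ℝ) ≤ 2 / s := Nat.floor_le (by positivity)
    have hNge : 1 / s ≤ (N:ℝ) := by
      have h1 := Nat.lt_floor_add_one (2 / s)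
      rw [← hNdef] at h1
      have h1s : (1:ℝ) ≤ 1 / s := one_le_one_div hspos hcase
      have h2' : (2:ℝ) / s = 1 / s + 1 / s := by ring
      linarith
    -- the rotated centers
    set c : ℕ → ℝ³ := fun k => rotZ (2 * π * k / N) x with hcdef
    have hint_eq : ∀ k : ℕ, (∫ y in ball (c k) (2 * r₀), ‖b y‖ ^ 2) = I :=
      fun k => rot_ball_integral b _ (hsym _) x _
    -- distance bound between distinct centers
    have hdist : ∀ j k : ℕ, j < k → k < N → 4 * r₀ ≤ dist (c j) (c k) := by
      intro j k hjk hkN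
      have hγ : c j = rotZ (2 * π * k / N) (rotZ (2 * π * j / N - 2 * π * k / N) x) := by
        rw [hcdef, rotZ_rotZ]; ring_nf
      have : dist (c j) (c k) = ‖rotZ (2 * π * j / N - 2 * π * k / N) x - x‖ := by
        rw [dist_eq_norm, hγ, hcdef]
        simp only
        rw [rotZ_sub, rotZ_norm]
      rw [this, norm_rotZ_sub_self]
      set m : ℕ := k - j with hmdef
      have hm1 : 1 ≤ m := by omega
      have hmN : m < N := by omega
      have hc : ((m:ℕ):ℝ) = (k:ℝ) - (j:ℝ) := by
        rw [hmdef]; push_cast [Nat.cast_sub hjk.le]; ring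
      have hmr : ((2 * π * j / N - 2 * π * k / N) / 2) = -(π * m / N) := by
        rw [hc]; ring
      rw [hmr, Real.sin_neg, abs_neg, ← hrdef]
      have hsin : 2 / (N:ℝ) ≤ Real.sin (π * m / N) := sin_lower hN2 hm1 hmN
      have hsinnn : 0 ≤ Real.sin (π * m / N) := le_trans (by positivity) hsin
      rw [abs_of_nonneg hsinnn]
      have h4 : 4 * r₀ ≤ 2 * (2 / (N:ℝ)) * r := by
        have hNs2 : (N:ℝ) * s ≤ 2 := by
          rw [← le_div_iff₀ hspos]; exact hNle
        rw [show 2 * (2 / (N:ℝ)) * r = 4 * r / N by ring, le_div_iff₀ hNpos]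
        nlinarith [hr0.le, hsr']
      refine h4.trans ?_
      have : 0 ≤ r := hr0.le
      nlinarith
    have hdisj : (↑(Finset.range N) : Set ℕ).Pairwise
        (Function.onFun Disjoint fun k => ball (c k) (2 * r₀)) := by
      intro j hj k hk hjk
      simp only [Finset.coe_range, mem_Iio] at hj hk
      have key : ∀ a b' : ℕ, a < b' → b' < N →
          Disjoint (ball (c a) (2 * r₀)) (ball (c b') (2 * r₀)) := by
        intro a b' hab hbN
        exact ball_disjoint_ball (by linarith [hdist a b' hab hbN])
      rcases lt_or_gt_of_ne hjk with h | h
      · exact key j k h hk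
      · exact (key k j h hj).symm
    have hsum := integral_biUnion_finset (Finset.range N)
      (fun i _ => measurableSet_ball) hdisj
      (fun i _ => hf.integrableOn) (f := fun y => ‖b y‖ ^ 2)
    have hle : ∑ k ∈ Finset.range N, (∫ y in ball (c k) (2 * r₀), ‖b y‖ ^ 2) ≤ T := by
      rw [← hsum]; exact setIntegral_le_integral hf hfnn
    rw [Finset.sum_congr rfl (fun k _ => hint_eq k), Finset.sum_const, Finset.card_range,
      nsmul_eq_mul] at hle
    -- N * I ≤ T and N ≥ 1/s give I ≤ s * T
    have hNs : 1 ≤ (N:ℝ) * s := by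
      rw [← div_le_iff₀ hspos] at *; linarith [hNge]
    calc I = 1 * I := (one_mul I).symm
      _ ≤ ((N:ℝ) * s) * I := mul_le_mul_of_nonneg_right hNs hInn
      _ = s * ((N:ℝ) * I) := by ring
      _ ≤ s * T := mul_le_mul_of_nonneg_left hle hspos.le
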